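/- arXiv:1610.00888 — 6 statements merged into one kernel-verified Lean document; each statement's English description precedes it below -/
import Mathlib

section
/- Gordan-type alternative: Suppose Λ and X are nonempty sets and {f_λ}_{λ∈Λ} is a family of real-valued functions on X that is infsup-convex on X and such that for every x ∈ X, the function λ ↦ f_λ(x) is bounded. Then exactly one of the following holds: (a1) there exists x ∈ X with sup_{λ∈Λ} f_λ(x) < 0; (a2) there exists a positive linear functional L on ℓ^∞(Λ) with L(𝟏) = 1 such that inf_{x∈X} L({f_λ(x)}_{λ∈Λ}) ≥ 0. -/
/-!
If no `x` has `sup_λ f_λ(x) < 0`, infsup-convexity says that no conic combination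
`Σ tⱼ f(xⱼ)` of the rows `f(x) ∈ ℓ^∞(Λ)` is bounded above by a negative constant. Hence `-𝟏`
lies outside the convex cone spanned by the nonnegative functions and the rows, and `𝟏` is an
order unit for that cone, so the M. Riesz extension theorem extends `c𝟏 ↦ c` to a linear
functional nonnegative on the cone: this is the mean `L` of (a2). Conversely, a positive
normalized `L` satisfies `L Φ ≤ sup Φ`, so (a1) and (a2) exclude each other.
-/

open scoped ENNReal

/-- The constant-one function in `ℓ^∞(Λ)`. -/
noncomputable def lpinfOne (Λ : Type*) : lp (fun _ : Λ => ℝ) ∞ :=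
  ⟨fun _ => (1 : ℝ), memℓp_infty ⟨1, by rintro x ⟨l, rfl⟩; simp⟩⟩

/-- A family `{f_λ}` of real-valued functions on `X` is infsup-convex on `X`. -/
def InfSupConvex {Λ X : Type*} (f : Λ → X → ℝ) : Prop :=
  ∀ m : ℕ, 0 < m → ∀ t : Fin m → ℝ, (∀ j, 0 ≤ t j) → (∑ j, t j) = 1 →
    ∀ x : Fin m → X,
      ⨅ x' : X, ⨆ l, (f l x' : EReal) ≤ ⨆ l, ((∑ j, t j * f l (x j) : ℝ) : EReal)

theorem PointedCone.exists_linearMap_nonneg_eq_one {E : Type*} [AddCommGroup E] [Module ℝ E]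
    (K : PointedCone ℝ E) (e : E) (he : -e ∉ K) (hK : ∀ y, ∃ c : ℝ, c • e + y ∈ K) :
    ∃ g : E →ₗ[ℝ] ℝ, g e = 1 ∧ ∀ x ∈ K, 0 ≤ g x := by
  have he0 : e ≠ 0 := by rintro rfl; exact he (by simp)
  set f : E →ₗ.[ℝ] ℝ := LinearPMap.mkSpanSingleton e (1 : ℝ) he0
  have mem_dom : ∀ c : ℝ, c • e ∈ f.domain := fun c =>
    Submodule.smul_mem _ c (Submodule.mem_span_singleton_self e)
  have hf : ∀ c : ℝ, f ⟨c • e, mem_dom c⟩ = c := fun c =>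
    (LinearPMap.mkSpanSingleton'_apply e (1 : ℝ) _ c _).trans (by simp)
  have nonneg : ∀ x : f.domain, (x : E) ∈ K → 0 ≤ f x := by
    rintro ⟨x, hx⟩ hxK
    obtain ⟨c, rfl⟩ := Submodule.mem_span_singleton.1 hx
    rw [hf]
    by_contra! hc
    have := K.smul_mem (r := -c⁻¹) (by simp [hc.le]) hxK
    rw [smul_smul, neg_mul, inv_mul_cancel₀ hc.ne, neg_one_smul] at this
    exact he this
  have dense : ∀ y, ∃ x : f.domain, (x : E) + y ∈ K := fun y => by
    obtain ⟨c, hc⟩ := hK y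
    exact ⟨⟨c • e, mem_dom c⟩, hc⟩
  obtain ⟨g, hgf, hg⟩ := riesz_extension K f nonneg dense
  refine ⟨g, ?_, hg⟩
  have := hgf ⟨(1 : ℝ) • e, mem_dom 1⟩
  rwa [hf, Submodule.coe_mk, one_smul] at this

section

variable {Λ : Type*}

local notation "ℓ^∞(" Λ ")" => lp (fun _ : Λ => ℝ) ∞

theorem lpinfOne_apply (l : Λ) : lpinfOne Λ l = 1 := rfl

theorem apply_le_of_forall_le {L : ℓ^∞(Λ) →ₗ[ℝ] ℝ}
    (hpos : ∀ Φ : ℓ^∞(Λ), (∀ l, 0 ≤ Φ l) → 0 ≤ L Φ) (h1 : L (lpinfOne Λ) = 1)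
    {Φ : ℓ^∞(Λ)} {c : ℝ} (h : ∀ l, Φ l ≤ c) : L Φ ≤ c := by
  have := hpos (c • lpinfOne Λ - Φ) fun l => by
    simpa only [lp.coeFn_sub, lp.coeFn_smul, Pi.sub_apply, Pi.smul_apply, lpinfOne_apply,
      smul_eq_mul, mul_one, sub_nonneg] using h l
  rw [map_sub, map_smul, h1, smul_eq_mul, mul_one] at this
  linarith

theorem exists_smul_lpinfOne_add_nonneg (Φ : ℓ^∞(Λ)) :
    ∃ c : ℝ, ∀ l, 0 ≤ (c • lpinfOne Λ + Φ) l := by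
  refine ⟨‖Φ‖, fun l => ?_⟩
  have := lp.norm_apply_le_norm ENNReal.top_ne_zero Φ l
  simp only [lp.coeFn_add, lp.coeFn_smul, Pi.add_apply, Pi.smul_apply, lpinfOne_apply,
    smul_eq_mul, mul_one]
  linarith [neg_abs_le (Φ l), Real.norm_eq_abs (Φ l)]

theorem neg_lpinfOne_notMem_hull {G : Set ℓ^∞(Λ)}
    (hG : ∀ Ψ ∈ PointedCone.hull ℝ G, ∀ c : ℝ, (∀ l, Ψ l ≤ c) → 0 ≤ c) :
    -lpinfOne Λ ∉ PointedCone.hull ℝ ({Φ | ∀ l, 0 ≤ Φ l} ∪ G) := by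
  have dominates : ∀ Φ ∈ PointedCone.hull ℝ ({Φ | ∀ l, 0 ≤ Φ l} ∪ G),
      ∃ Ψ ∈ PointedCone.hull ℝ G, ∀ l, Ψ l ≤ Φ l := by
    intro Φ hΦ
    induction hΦ using Submodule.span_induction with
    | mem Φ hΦ =>
      rcases hΦ with hΦ | hΦ
      · exact ⟨0, zero_mem _, fun l => by simpa using hΦ l⟩
      · exact ⟨Φ, PointedCone.subset_hull hΦ, fun _ => le_rfl⟩
    | zero => exact ⟨0, zero_mem _, fun _ => le_rfl⟩
    | add Φ₁ Φ₂ _ _ h₁ h₂ =>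
      obtain ⟨Ψ₁, hΨ₁, hle₁⟩ := h₁
      obtain ⟨Ψ₂, hΨ₂, hle₂⟩ := h₂
      exact ⟨Ψ₁ + Ψ₂, add_mem hΨ₁ hΨ₂, fun l => by simpa using add_le_add (hle₁ l) (hle₂ l)⟩
    | smul a Φ _ h =>
      obtain ⟨Ψ, hΨ, hle⟩ := h
      refine ⟨a • Ψ, Submodule.smul_mem _ a hΨ, fun l => ?_⟩
      simpa [← Nonneg.coe_smul] using mul_le_mul_of_nonneg_left (hle l) a.2
  intro hmem
  obtain ⟨Ψ, hΨ, hle⟩ := dominates _ hmem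
  have := hG Ψ hΨ (-1) fun l => by simpa [lpinfOne_apply] using hle l
  norm_num at this

theorem exists_positive_normalized_functional_nonneg_on {G : Set ℓ^∞(Λ)}
    (hG : ∀ Ψ ∈ PointedCone.hull ℝ G, ∀ c : ℝ, (∀ l, Ψ l ≤ c) → 0 ≤ c) :
    ∃ L : ℓ^∞(Λ) →ₗ[ℝ] ℝ, (∀ Φ : ℓ^∞(Λ), (∀ l, 0 ≤ Φ l) → 0 ≤ L Φ) ∧
      L (lpinfOne Λ) = 1 ∧ ∀ Φ ∈ G, 0 ≤ L Φ := by
  set K := PointedCone.hull ℝ ({Φ | ∀ l, 0 ≤ Φ l} ∪ G)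
  have mem_K_of_nonneg : ∀ Φ : ℓ^∞(Λ), (∀ l, 0 ≤ Φ l) → Φ ∈ K := fun Φ hΦ =>
    PointedCone.subset_hull (Set.mem_union_left G hΦ)
  obtain ⟨L, hL1, hL⟩ := K.exists_linearMap_nonneg_eq_one (lpinfOne Λ)
    (neg_lpinfOne_notMem_hull hG) fun Φ =>
      (exists_smul_lpinfOne_add_nonneg Φ).imp fun _ hc => mem_K_of_nonneg _ hc
  exact ⟨L, fun Φ hΦ => hL Φ (mem_K_of_nonneg Φ hΦ), hL1,
    fun Φ hΦ => hL Φ (PointedCone.subset_hull (Set.mem_union_right _ hΦ))⟩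

section

variable {X : Type*} [Nonempty Λ] {f : Λ → X → ℝ}

theorem InfSupConvex.nonneg_of_forall_sum_le (hconv : InfSupConvex f)
    (hf : ∀ x, 0 ≤ ⨆ l, (f l x : EReal)) {m : ℕ} {t : Fin m → ℝ} (ht : ∀ j, 0 ≤ t j)
    (x : Fin m → X) {c : ℝ} (hc : ∀ l, ∑ j, t j * f l (x j) ≤ c) : 0 ≤ c := by
  by_contra! hc0
  obtain ⟨l₀⟩ := ‹Nonempty Λ›
  obtain ⟨j₀, -, hj₀⟩ := Finset.exists_ne_zero_of_sum_ne_zero ((hc l₀).trans_lt hc0).ne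
  set s := ∑ j, t j
  have hs : 0 < s := ((ht j₀).lt_of_ne (left_ne_zero_of_mul hj₀).symm).trans_le
    (Finset.single_le_sum (fun j _ => ht j) (Finset.mem_univ j₀))
  have hconv' := hconv m j₀.pos (fun j => t j / s) (fun j => div_nonneg (ht j) hs.le)
    (by rw [← Finset.sum_div, div_self hs.ne']) x
  have hbound : ⨆ l, ((∑ j, t j / s * f l (x j) : ℝ) : EReal) ≤ ((c / s : ℝ) : EReal) := by
    refine iSup_le fun l => EReal.coe_le_coe_iff.2 ?_
    calc ∑ j, t j / s * f l (x j) = (∑ j, t j * f l (x j)) / s := by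
          rw [Finset.sum_div]; exact Finset.sum_congr rfl fun j _ => by ring
      _ ≤ c / s := by gcongr; exact hc l
  have hneg : ((c / s : ℝ) : EReal) < 0 := EReal.coe_neg'.2 (div_neg_of_neg_of_pos hc0 hs)
  obtain ⟨x', hx'⟩ := iInf_lt_iff.1 ((hconv'.trans hbound).trans_lt hneg)
  exact (hf x').not_gt hx'

theorem InfSupConvex.nonneg_of_mem_hull (hconv : InfSupConvex f)
    (hf : ∀ x, 0 ≤ ⨆ l, (f l x : EReal)) {F : X → ℓ^∞(Λ)}
    (hF : ∀ x l, F x l = f l x) {Ψ : ℓ^∞(Λ)}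
    (hΨ : Ψ ∈ PointedCone.hull ℝ (Set.range F)) {c : ℝ} (hc : ∀ l, Ψ l ≤ c) : 0 ≤ c := by
  obtain ⟨m, t, v, rfl⟩ := Submodule.mem_span_set'.1 hΨ
  choose x hx using fun j => (v j).2
  refine hconv.nonneg_of_forall_sum_le hf (t := fun j => t j) (fun j => (t j).2) x fun l => ?_
  simpa only [← hx, ← Nonneg.coe_smul, lp.coeFn_sum, Finset.sum_apply, lp.coeFn_smul,
    Pi.smul_apply, smul_eq_mul, hF] using hc l

end

end

theorem stmt2_general (Λ X : Type*) [Nonempty Λ]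
    (f : Λ → X → ℝ) (hconv : InfSupConvex f)
    (F : X → lp (fun _ : Λ => ℝ) ∞) (hF : ∀ x l, F x l = f l x) :
    Xor'
      (∃ x : X, (⨆ l, (f l x : EReal)) < 0)
      (∃ L : lp (fun _ : Λ => ℝ) ∞ →ₗ[ℝ] ℝ,
        (∀ Φ : lp (fun _ : Λ => ℝ) ∞, (∀ l, 0 ≤ Φ l) → 0 ≤ L Φ) ∧
        L (lpinfOne Λ) = 1 ∧
        (0 : EReal) ≤ ⨅ x : X, (L (F x) : EReal)) := by
  refine xor_iff_iff_not.2 ⟨?_, fun hnL => by_contra fun hA => hnL ?_⟩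
  · rintro ⟨x, hx⟩ ⟨L, hpos, h1, hinf⟩
    obtain ⟨c, hxc, hc⟩ := EReal.lt_iff_exists_real_btwn.1 hx
    have hLc : L (F x) ≤ c := apply_le_of_forall_le hpos h1 fun l => by
      rw [hF]; exact_mod_cast (le_iSup (fun l => (f l x : EReal)) l).trans hxc.le
    have hL0 : (0 : EReal) ≤ L (F x) := hinf.trans (iInf_le _ x)
    linarith [EReal.coe_nonneg.1 hL0, EReal.coe_lt_coe_iff.1 hc]
  · simp only [not_exists, not_lt] at hA
    obtain ⟨L, hpos, h1, hL⟩ := exists_positive_normalized_functional_nonneg_on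
      fun Ψ hΨ c hc => hconv.nonneg_of_mem_hull hA hF hΨ hc
    exact ⟨L, hpos, h1, le_iInf fun x => EReal.coe_nonneg.2 (hL _ ⟨x, rfl⟩)⟩

/-- Gordan-type alternative for an infsup-convex family with pointwise bounded values:
either some `x` makes `sup_λ f_λ(x) < 0`, or some positive normalized linear functional
`L` on `ℓ^∞(Λ)` satisfies `inf_x L({f_λ(x)}_λ) ≥ 0`, but never both. -/
theorem stmt2 (Λ X : Type*) [Nonempty Λ] [Nonempty X]
    (f : Λ → X → ℝ) (hconv : InfSupConvex f)
    (F : X → lp (fun _ : Λ => ℝ) ∞) (hF : ∀ x l, F x l = f l x) :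
    Xor'
      (∃ x : X, (⨆ l, (f l x : EReal)) < 0)
      (∃ L : lp (fun _ : Λ => ℝ) ∞ →ₗ[ℝ] ℝ,
        (∀ Φ : lp (fun _ : Λ => ℝ) ∞, (∀ l, 0 ≤ Φ l) → 0 ≤ L Φ) ∧
        L (lpinfOne Λ) = 1 ∧
        (0 : EReal) ≤ ⨅ x : X, (L (F x) : EReal)) :=
  stmt2_general Λ X f hconv F hF
end

section
/- Let X and Λ be nonempty sets and {f_λ}_{λ∈Λ} a family of real-valued functions on X such that for each x ∈ X the function λ ↦ f_λ(x) is bounded, and such that the joint range set { {f_λ(x)}_{λ∈Λ} : x ∈ X } is a convex subset of ℓ^∞(Λ). Then the family {f_λ}_{λ∈Λ} is infsup-convex on X. -/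
open scoped ENNReal

/-! The convex combination `∑ tⱼ F(xⱼ)` of points of the convex joint range is itself `F x'` for
some `x'`; evaluating coordinatewise, `f_λ(x') = ∑ tⱼ f_λ(xⱼ)` for every `λ`, so `x'` already
attains the right-hand side of the infsup inequality. -/

theorem lp.sum_smul_apply {ι Λ : Type*} {E : Λ → Type*} [∀ l, NormedAddCommGroup (E l)]
    [∀ l, NormedSpace ℝ (E l)] {p : ℝ≥0∞} [Fact (1 ≤ p)] (s : Finset ι) (t : ι → ℝ)
    (g : ι → lp E p) (l : Λ) :
    (∑ i ∈ s, t i • g i) l = ∑ i ∈ s, t i • g i l := by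
  rw [lp.coeFn_sum, Finset.sum_apply]
  rfl

theorem InfSupConvex.of_exists_eq_sum {Λ X : Type*} {f : Λ → X → ℝ}
    (h : ∀ m (t : Fin m → ℝ), (∀ j, 0 ≤ t j) → ∑ j, t j = 1 → ∀ x : Fin m → X,
      ∃ x', ∀ l, f l x' = ∑ j, t j * f l (x j)) :
    InfSupConvex f := by
  intro m _ t ht hsum x
  obtain ⟨x', hx'⟩ := h m t ht hsum x
  calc ⨅ y : X, ⨆ l, (f l y : EReal) ≤ ⨆ l, (f l x' : EReal) := iInf_le _ x'
    _ = ⨆ l, ((∑ j, t j * f l (x j) : ℝ) : EReal) := by simp_rw [hx']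

theorem stmt4_general (Λ X : Type*)
    (f : Λ → X → ℝ)
    (F : X → lp (fun _ : Λ => ℝ) ∞) (hF : ∀ x l, F x l = f l x)
    (hrange : Convex ℝ (Set.range F)) :
    InfSupConvex f := by
  refine InfSupConvex.of_exists_eq_sum fun m t ht hsum x => ?_
  obtain ⟨x', hx'⟩ :=
    hrange.sum_mem (fun j _ => ht j) hsum fun j _ => Set.mem_range_self (x j)
  refine ⟨x', fun l => ?_⟩
  rw [← hF, hx', lp.sum_smul_apply]
  simp only [hF, smul_eq_mul]

/-- If the joint range set `{ {f_λ(x)}_λ : x ∈ X }` is a convex subset of `ℓ^∞(Λ)`,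
then the family `{f_λ}` is infsup-convex on `X`. -/
theorem stmt4 (Λ X : Type*) [Nonempty Λ] [Nonempty X]
    (f : Λ → X → ℝ)
    (F : X → lp (fun _ : Λ => ℝ) ∞) (hF : ∀ x l, F x l = f l x)
    (hrange : Convex ℝ (Set.range F)) :
    InfSupConvex f :=
  stmt4_general Λ X f F hF hrange
end

section
/- Z-matrix quadratic families are infsup-convex: Let N ≥ 1, Λ a nonempty set, and for each λ ∈ Λ let A_λ be an N×N real symmetric matrix, b_λ ∈ ℝ^N, c_λ ∈ ℝ such that the (N+1)×(N+1) block matrix [[A_λ, b_λ],[b_λ^T, 2c_λ]] is a Z-matrix (symmetric with nonpositive off-diagonal entries). Define q_λ(x) = (1/2) x^T A_λ x + b_λ^T x + c_λ. If X ⊆ ℝ^N contains the nonnegative orthant ℝ^N_+, then the family {q_λ}_{λ∈Λ} is infsup-convex on X. -/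
/-!
Given weights `t` and points `x₁, …, x_m`, compare with the point `y` whose coordinates are the
weighted root mean squares `y_k = √(∑ⱼ tⱼ xⱼₖ²)`; it lies in the nonnegative orthant. By
Cauchy–Schwarz, `y_i y_k ≥ ∑ⱼ tⱼ xⱼᵢ xⱼₖ` with equality for `i = k`, and `y_k ≥ ∑ⱼ tⱼ xⱼₖ`.
The Z-matrix condition says exactly that the coefficients multiplying these quantities in `q_λ`
(the off-diagonal entries of `A_λ` and the entries of `b_λ`) are nonpositive, so
`q_λ(y) ≤ ∑ⱼ tⱼ q_λ(xⱼ)` for every `λ` at once.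
-/

open Matrix
/-- A Z-matrix: a real symmetric matrix with nonpositive off-diagonal entries. -/
def IsZMatrix {n : Type*} [DecidableEq n] (M : Matrix n n ℝ) : Prop :=
  M.IsSymm ∧ ∀ i j, i ≠ j → M i j ≤ 0

/-- A family `{q_λ}` of real-valued functions is infsup-convex on a subset `X`. -/
def InfSupConvexOn {Λ E : Type*} (X : Set E) (f : Λ → E → ℝ) : Prop :=
  ∀ m : ℕ, 0 < m → ∀ t : Fin m → ℝ, (∀ j, 0 ≤ t j) → (∑ j, t j) = 1 →
    ∀ x : Fin m → E, (∀ j, x j ∈ X) →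
      ⨅ x' : X, ⨆ l, (f l x' : EReal) ≤ ⨆ l, ((∑ j, t j * f l (x j) : ℝ) : EReal)

open Finset

lemma sum_weighted_mul_le_sqrt_mul_sqrt {J : Type*} [Fintype J] {t : J → ℝ} (ht : ∀ j, 0 ≤ t j)
    (a b : J → ℝ) :
    ∑ j, t j * (a j * b j) ≤ √(∑ j, t j * a j ^ 2) * √(∑ j, t j * b j ^ 2) := by
  rw [← Real.sqrt_mul (sum_nonneg fun j _ => mul_nonneg (ht j) (sq_nonneg _))]
  refine Real.le_sqrt_of_sq_le (sum_sq_le_sum_mul_sum_of_sq_le_mul _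
    (fun j _ => mul_nonneg (ht j) (sq_nonneg _)) (fun j _ => mul_nonneg (ht j) (sq_nonneg _))
    fun j _ => le_of_eq ?_)
  ring

section WeightedRms

variable {J ι : Type*} [Fintype J] {t : J → ℝ} (x : J → ι → ℝ)

variable (t) in
noncomputable def weightedRms : ι → ℝ := fun k => √(∑ j, t j * x j k ^ 2)

lemma weightedRms_nonneg (k : ι) : 0 ≤ weightedRms t x k := Real.sqrt_nonneg _

lemma weightedRms_mul_self (ht : ∀ j, 0 ≤ t j) (k : ι) :
    weightedRms t x k * weightedRms t x k = ∑ j, t j * (x j k * x j k) := by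
  rw [weightedRms, Real.mul_self_sqrt (sum_nonneg fun j _ => mul_nonneg (ht j) (sq_nonneg _))]
  simp only [sq]

lemma sum_mul_mul_le_weightedRms_mul (ht : ∀ j, 0 ≤ t j) (i k : ι) :
    ∑ j, t j * (x j i * x j k) ≤ weightedRms t x i * weightedRms t x k :=
  sum_weighted_mul_le_sqrt_mul_sqrt ht _ _

lemma sum_mul_le_weightedRms (ht : ∀ j, 0 ≤ t j) (ht1 : ∑ j, t j = 1) (k : ι) :
    ∑ j, t j * x j k ≤ weightedRms t x k := by
  simpa [ht1, weightedRms] using sum_weighted_mul_le_sqrt_mul_sqrt ht (fun j => x j k) fun _ => 1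

end WeightedRms

section Quadratic

variable {J ι : Type*} [Fintype J] [Fintype ι] {t : J → ℝ} (x : J → ι → ℝ)

lemma dotProduct_mulVec_self_eq_sum (A : Matrix ι ι ℝ) (y : ι → ℝ) :
    y ⬝ᵥ A *ᵥ y = ∑ i, ∑ k, A i k * (y i * y k) := by
  simp only [dotProduct, mulVec, mul_sum]
  exact sum_congr rfl fun i _ => sum_congr rfl fun k _ => by ring

lemma sum_mul_dotProduct_mulVec_self (A : Matrix ι ι ℝ) :
    ∑ j, t j * (x j ⬝ᵥ A *ᵥ x j) = ∑ i, ∑ k, A i k * ∑ j, t j * (x j i * x j k) := by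
  simp only [dotProduct_mulVec_self_eq_sum, mul_sum]
  rw [sum_comm]
  refine sum_congr rfl fun i _ => ?_
  rw [sum_comm]
  exact sum_congr rfl fun k _ => sum_congr rfl fun j _ => by ring

lemma weightedRms_dotProduct_mulVec_le (ht : ∀ j, 0 ≤ t j)
    {A : Matrix ι ι ℝ} (hA : ∀ i k, i ≠ k → A i k ≤ 0) :
    weightedRms t x ⬝ᵥ A *ᵥ weightedRms t x ≤ ∑ j, t j * (x j ⬝ᵥ A *ᵥ x j) := by
  rw [dotProduct_mulVec_self_eq_sum, sum_mul_dotProduct_mulVec_self]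
  refine sum_le_sum fun i _ => sum_le_sum fun k _ => ?_
  obtain rfl | hik := eq_or_ne i k
  · rw [weightedRms_mul_self x ht]
  · exact mul_le_mul_of_nonpos_left (sum_mul_mul_le_weightedRms_mul x ht i k) (hA i k hik)

lemma dotProduct_weightedRms_le (ht : ∀ j, 0 ≤ t j) (ht1 : ∑ j, t j = 1) {b : ι → ℝ}
    (hb : ∀ k, b k ≤ 0) :
    b ⬝ᵥ weightedRms t x ≤ ∑ j, t j * (b ⬝ᵥ x j) := by
  calc b ⬝ᵥ weightedRms t x ≤ ∑ k, b k * ∑ j, t j * x j k :=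
        sum_le_sum fun k _ => mul_le_mul_of_nonpos_left (sum_mul_le_weightedRms x ht ht1 k) (hb k)
    _ = ∑ j, t j * (b ⬝ᵥ x j) := by
        simp only [dotProduct, mul_sum]
        rw [sum_comm]
        exact sum_congr rfl fun j _ => sum_congr rfl fun k _ => by ring

lemma quadratic_weightedRms_le (ht : ∀ j, 0 ≤ t j) (ht1 : ∑ j, t j = 1)
    {A : Matrix ι ι ℝ} (hA : ∀ i k, i ≠ k → A i k ≤ 0) {b : ι → ℝ} (hb : ∀ k, b k ≤ 0) (c : ℝ) :
    1 / 2 * (weightedRms t x ⬝ᵥ A *ᵥ weightedRms t x) + b ⬝ᵥ weightedRms t x + c ≤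
      ∑ j, t j * (1 / 2 * (x j ⬝ᵥ A *ᵥ x j) + b ⬝ᵥ x j + c) := by
  have hquad := weightedRms_dotProduct_mulVec_le x ht hA
  have hlin := dotProduct_weightedRms_le x ht ht1 hb
  simp only [mul_add, sum_add_distrib, ← sum_mul, ht1, mul_left_comm (t _) (1 / 2), ← mul_sum]
  linarith

end Quadratic

lemma IsZMatrix.fromBlocks₁₁_of_ne {ι κ : Type*} [DecidableEq ι] [DecidableEq κ]
    {A : Matrix ι ι ℝ} {B : Matrix ι κ ℝ} {C : Matrix κ ι ℝ} {D : Matrix κ κ ℝ}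
    (h : IsZMatrix (fromBlocks A B C D)) (i k : ι) (hik : i ≠ k) : A i k ≤ 0 := by
  simpa using h.2 (Sum.inl i) (Sum.inl k) (by simpa using hik)

lemma IsZMatrix.fromBlocks₁₂_nonpos {ι κ : Type*} [DecidableEq ι] [DecidableEq κ]
    {A : Matrix ι ι ℝ} {B : Matrix ι κ ℝ} {C : Matrix κ ι ℝ} {D : Matrix κ κ ℝ}
    (h : IsZMatrix (fromBlocks A B C D)) (i : ι) (k : κ) : B i k ≤ 0 := by
  simpa using h.2 (Sum.inl i) (Sum.inr k) (by simp)

lemma InfSupConvexOn.of_exists_le {Λ E : Type*} {X : Set E} {f : Λ → E → ℝ}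
    (h : ∀ m (t : Fin m → ℝ), (∀ j, 0 ≤ t j) → ∑ j, t j = 1 → ∀ x : Fin m → E, (∀ j, x j ∈ X) →
      ∃ y ∈ X, ∀ l, f l y ≤ ∑ j, t j * f l (x j)) :
    InfSupConvexOn X f := by
  intro m _ t ht ht1 x hx
  obtain ⟨y, hyX, hy⟩ := h m t ht ht1 x hx
  exact (iInf_le _ (⟨y, hyX⟩ : X)).trans (iSup_mono fun l => EReal.coe_le_coe_iff.2 (hy l))

theorem stmt9_general (N : ℕ) (Λ : Type*)
    (A : Λ → Matrix (Fin N) (Fin N) ℝ) (b : Λ → Fin N → ℝ) (c : Λ → ℝ)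
    (hZ : ∀ l, IsZMatrix (Matrix.fromBlocks (A l) (Matrix.replicateCol (Fin 1) (b l))
      (Matrix.replicateRow (Fin 1) (b l)) (Matrix.of fun _ _ => 2 * c l)))
    (q : Λ → (Fin N → ℝ) → ℝ)
    (hq : ∀ l x, q l x = (1 / 2) * (x ⬝ᵥ (A l).mulVec x) + b l ⬝ᵥ x + c l)
    (X : Set (Fin N → ℝ)) (hX : ∀ x : Fin N → ℝ, (∀ k, 0 ≤ x k) → x ∈ X) :
    InfSupConvexOn X q := by
  refine InfSupConvexOn.of_exists_le fun m t ht ht1 x _ =>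
    ⟨weightedRms t x, hX _ (weightedRms_nonneg x), fun l => ?_⟩
  simp only [hq]
  exact quadratic_weightedRms_le x ht ht1 (hZ l).fromBlocks₁₁_of_ne
    (fun k => (hZ l).fromBlocks₁₂_nonpos k 0) (c l)

/-- A family of quadratic functions whose extended block matrices are Z-matrices is
infsup-convex on any `X ⊆ ℝ^N` containing the nonnegative orthant. -/
theorem stmt9 (N : ℕ) (hN : 1 ≤ N) (Λ : Type*) [Nonempty Λ]
    (A : Λ → Matrix (Fin N) (Fin N) ℝ) (b : Λ → Fin N → ℝ) (c : Λ → ℝ)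
    (hZ : ∀ l, IsZMatrix (Matrix.fromBlocks (A l) (Matrix.replicateCol (Fin 1) (b l))
      (Matrix.replicateRow (Fin 1) (b l)) (Matrix.of fun _ _ => 2 * c l)))
    (q : Λ → (Fin N → ℝ) → ℝ)
    (hq : ∀ l x, q l x = (1 / 2) * (x ⬝ᵥ (A l).mulVec x) + b l ⬝ᵥ x + c l)
    (X : Set (Fin N → ℝ)) (hX : ∀ x : Fin N → ℝ, (∀ k, 0 ≤ x k) → x ∈ X) :
    InfSupConvexOn X q :=
  stmt9_general N Λ A b c hZ q hq X hX
end

section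
/- Fritz John conditions for an infinite quadratic program: With the setting of Z-matrix quadratic data q, {q_λ}_{λ∈Λ} on X ⊇ ℝ^N_+ (each associated extended matrix being a Z-matrix), assume the feasible set X_0 = {x ∈ X : sup_{λ∈Λ} q_λ(x) ≤ 0} is nonempty, λ ↦ q_λ(x) is bounded for each x ∈ X, and x⁰ ∈ X is an optimal solution of the program inf_{x∈X_0} q(x). Then there exist y ≥ 0 and a positive continuous linear functional L on ℓ^∞(Λ) with y + L(𝟏) ≠ 0 such that the function x ↦ y·q(x) + L({q_λ(x)}_{λ∈Λ}) attains its infimum over X at x⁰, and L({q_λ(x⁰)}_{λ∈Λ}) = 0. -/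
open Matrix
open scoped ENNReal

/-!
Z-matrix quadratics are hidden convex: `q (√(t x² + (1 - t) y²)) ≤ t q x + (1 - t) q y`
coordinatewise, and `q |x| ≤ q x`. Hence the set of pairs `(ρ, Φ)` dominating
`(q x - q x₀, (q_λ x)_λ)` for some `x ∈ ℝᴺ` is convex, and optimality of `x₀` (transported from
`X` to `ℝᴺ` through `x ↦ |x|`) keeps it away from the pairs whose coordinates are all negative.
Separating the two by Hahn–Banach gives the multipliers `(y, L)`.
-/

open scoped lp

section ZQuadratic

variable {n : Type*} [Fintype n]

noncomputable def quadFun (M : Matrix n n ℝ) (v : n → ℝ) (c : ℝ) (x : n → ℝ) : ℝ :=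
  (1 / 2) * (x ⬝ᵥ M *ᵥ x) + v ⬝ᵥ x + c

lemma dotProduct_mulVec_self_eq_sum_s12 (M : Matrix n n ℝ) (x : n → ℝ) :
    x ⬝ᵥ M *ᵥ x = ∑ i, ∑ j, M i j * (x i * x j) := by
  simp only [dotProduct, mulVec, Finset.mul_sum]
  exact Finset.sum_congr rfl fun i _ => Finset.sum_congr rfl fun j _ => by ring

lemma weighted_mul_add_mul_le_sqrt_mul_sqrt {t : ℝ} (ht₀ : 0 ≤ t) (ht₁ : t ≤ 1) (a b c d : ℝ) :
    t * (a * c) + (1 - t) * (b * d) ≤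
      √(t * a ^ 2 + (1 - t) * b ^ 2) * √(t * c ^ 2 + (1 - t) * d ^ 2) := by
  rw [← Real.sqrt_mul (by positivity)]
  refine (le_abs_self _).trans (Real.abs_le_sqrt ?_)
  nlinarith [mul_nonneg (mul_nonneg ht₀ (sub_nonneg.2 ht₁)) (sq_nonneg (a * d - b * c))]

lemma weighted_add_le_sqrt {t : ℝ} (ht₀ : 0 ≤ t) (ht₁ : t ≤ 1) (a b : ℝ) :
    t * a + (1 - t) * b ≤ √(t * a ^ 2 + (1 - t) * b ^ 2) := by
  refine (le_abs_self _).trans (Real.abs_le_sqrt ?_)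
  nlinarith [mul_nonneg (mul_nonneg ht₀ (sub_nonneg.2 ht₁)) (sq_nonneg (a - b))]

variable {M : Matrix n n ℝ} {v : n → ℝ}

/-- Off the diagonal the sign conditions reduce this to the two-term Cauchy–Schwarz inequality
`t a c + (1 - t) b d ≤ √(t a² + (1 - t) b²) √(t c² + (1 - t) d²)`. -/
lemma quadFun_sqrt_combo_le (hM : ∀ i j, i ≠ j → M i j ≤ 0) (hv : ∀ i, v i ≤ 0) (c : ℝ)
    (x y : n → ℝ) {t : ℝ} (ht₀ : 0 ≤ t) (ht₁ : t ≤ 1) :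
    quadFun M v c (fun i => √(t * x i ^ 2 + (1 - t) * y i ^ 2)) ≤
      t * quadFun M v c x + (1 - t) * quadFun M v c y := by
  set w : n → ℝ := fun i => √(t * x i ^ 2 + (1 - t) * y i ^ 2)
  have hquad : ∀ i j, M i j * (w i * w j) ≤
      t * (M i j * (x i * x j)) + (1 - t) * (M i j * (y i * y j)) := by
    intro i j
    rcases eq_or_ne i j with rfl | hij
    · rw [Real.mul_self_sqrt (by positivity)]
      exact le_of_eq (by ring)
    · calc M i j * (w i * w j)
          ≤ M i j * (t * (x i * x j) + (1 - t) * (y i * y j)) :=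
            mul_le_mul_of_nonpos_left
              (weighted_mul_add_mul_le_sqrt_mul_sqrt ht₀ ht₁ _ _ _ _) (hM i j hij)
        _ = _ := by ring
  have hlin : ∀ i, v i * w i ≤ t * (v i * x i) + (1 - t) * (v i * y i) := fun i =>
    calc v i * w i ≤ v i * (t * x i + (1 - t) * y i) :=
          mul_le_mul_of_nonpos_left (weighted_add_le_sqrt ht₀ ht₁ _ _) (hv i)
      _ = _ := by ring
  have hquad_sum : w ⬝ᵥ M *ᵥ w ≤ t * (x ⬝ᵥ M *ᵥ x) + (1 - t) * (y ⬝ᵥ M *ᵥ y) := by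
    simp only [dotProduct_mulVec_self_eq_sum_s12, Finset.mul_sum, ← Finset.sum_add_distrib]
    exact Finset.sum_le_sum fun i _ => Finset.sum_le_sum fun j _ => hquad i j
  have hlin_sum : v ⬝ᵥ w ≤ t * (v ⬝ᵥ x) + (1 - t) * (v ⬝ᵥ y) := by
    simp only [dotProduct, Finset.mul_sum, ← Finset.sum_add_distrib]
    exact Finset.sum_le_sum fun i _ => hlin i
  simp only [quadFun]
  linarith

lemma quadFun_abs_le (hM : ∀ i j, i ≠ j → M i j ≤ 0) (hv : ∀ i, v i ≤ 0) (c : ℝ)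
    (x : n → ℝ) : quadFun M v c (fun i => |x i|) ≤ quadFun M v c x := by
  simpa [Real.sqrt_sq_eq_abs] using quadFun_sqrt_combo_le hM hv c x x zero_le_one le_rfl

end ZQuadratic

lemma IsZMatrix.nonpos_of_fromBlocks {n : Type*} [DecidableEq n] {A : Matrix n n ℝ}
    {b : n → ℝ} {c : ℝ}
    (hZ : IsZMatrix (fromBlocks A (replicateCol (Fin 1) b) (replicateRow (Fin 1) b)
      (of fun _ _ => 2 * c))) :
    (∀ i j, i ≠ j → A i j ≤ 0) ∧ ∀ i, b i ≤ 0 :=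
  ⟨fun i j hij => by simpa using hZ.2 (.inl i) (.inl j) (by simpa using hij),
    fun i => by simpa using hZ.2 (.inl i) (.inr 0) (by simp)⟩

lemma nonneg_of_forall_le_add_mul {u a b : ℝ} (h : ∀ t, 0 ≤ t → u ≤ a + t * b) : 0 ≤ b := by
  by_contra! hb
  have hua : u ≤ a := by simpa using h 0 le_rfl
  have := h ((a - u + 1) / -b) (div_nonneg (by linarith) (by linarith))
  rw [div_mul_eq_mul_div, div_neg, mul_div_assoc, div_self hb.ne] at this
  linarith

lemma nonneg_of_forall_mul_lt {u a : ℝ} (h : ∀ ε, 0 < ε → ε ≤ 1 → ε * a < u) : 0 ≤ u := by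
  by_contra! hu
  have ha : a < 0 := (by simpa using h 1 one_pos le_rfl : a < u).trans hu
  have := h (u / a) (div_pos_of_neg_of_neg hu ha)
    ((div_le_one_of_neg ha).2 (by simpa using (h 1 one_pos le_rfl).le))
  rw [div_mul_cancel₀ _ ha.ne] at this
  exact lt_irrefl _ this

section Alternative

variable {Λ : Type*}

lemma norm_lpinfOne_le : ‖lpinfOne Λ‖ ≤ 1 :=
  lp.norm_le_of_forall_le zero_le_one fun l => by simp [lpinfOne]

lemma neg_of_mem_ball_neg_lpinfOne {Φ : ℓ^∞(Λ, ℝ)} (hΦ : Φ ∈ Metric.ball (-lpinfOne Λ) 1)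
    (l : Λ) : Φ l < 0 := by
  have h := (lp.norm_apply_le_norm ENNReal.top_ne_zero _ l).trans_lt (mem_ball_iff_norm.1 hΦ)
  have hone : lpinfOne Λ l = 1 := rfl
  rw [lp.coeFn_sub, lp.coeFn_neg, Pi.sub_apply, Pi.neg_apply, sub_neg_eq_add, hone,
    Real.norm_eq_abs, abs_lt] at h
  linarith [h.2]

lemma smul_neg_lpinfOne_mem_ball {ε : ℝ} (hε₀ : 0 < ε) (hε₁ : ε ≤ 1) :
    -(ε • lpinfOne Λ) ∈ Metric.ball (-lpinfOne Λ) 1 := by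
  rw [mem_ball_iff_norm, show -(ε • lpinfOne Λ) - -lpinfOne Λ = (1 - ε) • lpinfOne Λ by module,
    norm_smul, Real.norm_of_nonneg (sub_nonneg.2 hε₁)]
  nlinarith [norm_lpinfOne_le (Λ := Λ)]

/-- Hahn–Banach separation of `D` from the open convex set `(-∞, 0) × ball (-𝟏) 1`; the
separating level is `0` because `0 ∈ D` and `0` lies in the closure of that set. -/
theorem exists_nonneg_functional_of_convex_upperSet (D : Set (ℝ × ℓ^∞(Λ, ℝ)))
    (hconv : Convex ℝ D) (hzero : 0 ∈ D)
    (hup : ∀ p ∈ D, ∀ r : ℝ × ℓ^∞(Λ, ℝ), p.1 ≤ r.1 → (∀ l, p.2 l ≤ r.2 l) → r ∈ D)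
    (hneg : ∀ p ∈ D, p.1 < 0 → ∃ l, 0 ≤ p.2 l) :
    ∃ (y : ℝ) (L : ℓ^∞(Λ, ℝ) →L[ℝ] ℝ), 0 ≤ y ∧ (∀ Φ : ℓ^∞(Λ, ℝ), (∀ l, 0 ≤ Φ l) → 0 ≤ L Φ) ∧
      0 < y + L (lpinfOne Λ) ∧ ∀ p ∈ D, 0 ≤ y * p.1 + L p.2 := by
  set s : Set (ℝ × ℓ^∞(Λ, ℝ)) := Set.Iio 0 ×ˢ Metric.ball (-lpinfOne Λ) 1
  have hdisj : Disjoint s D := Set.disjoint_left.2 fun p hs hD => by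
    obtain ⟨l, hl⟩ := hneg p hD hs.1
    exact hl.not_gt (neg_of_mem_ball_neg_lpinfOne hs.2 l)
  obtain ⟨f, u, hfs, hfD⟩ := geometric_hahn_banach_open ((convex_Iio 0).prod (convex_ball _ _))
    (isOpen_Iio.prod Metric.isOpen_ball) hconv hdisj
  set y := f (1, 0)
  set L := f.comp (.inr ℝ ℝ _)
  have hf : ∀ p : ℝ × ℓ^∞(Λ, ℝ), f p = y * p.1 + L p.2 := fun p => by
    rw [← f.comp_inl_add_comp_inr p, mul_comm]
    simpa [y, L] using congrArg (· + L p.2) (map_smul f p.1 (1, 0))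
  have hray : ∀ k, (∀ t : ℝ, 0 ≤ t → t • k ∈ D) → 0 ≤ f k := fun k hk =>
    nonneg_of_forall_le_add_mul (u := u) (a := 0) fun t ht => by simpa using hfD _ (hk t ht)
  have hy : 0 ≤ y := hray (1, 0) fun t ht => hup 0 hzero _ (by simpa) (by simp)
  have hL : ∀ Φ : ℓ^∞(Λ, ℝ), (∀ l, 0 ≤ Φ l) → 0 ≤ L Φ := fun Φ hΦ => by
    simpa [hf] using hray (0, Φ) fun t ht =>
      hup 0 hzero _ (by simp) fun l => by simpa using mul_nonneg ht (hΦ l)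
  have hsmul_mem : ∀ ε : ℝ, 0 < ε → ε ≤ 1 → ε • ((-1, -lpinfOne Λ) : ℝ × ℓ^∞(Λ, ℝ)) ∈ s :=
    fun ε hε₀ hε₁ => ⟨by simpa using hε₀, by simpa using smul_neg_lpinfOne_mem_ball hε₀ hε₁⟩
  have hu : 0 ≤ u := nonneg_of_forall_mul_lt fun ε hε₀ hε₁ => by
    simpa only [map_smul, smul_eq_mul] using hfs _ (hsmul_mem ε hε₀ hε₁)
  refine ⟨y, L, hy, hL, ?_, fun p hp => hf p ▸ hu.trans (hfD p hp)⟩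
  have hu' : u ≤ 0 := by simpa using hfD 0 hzero
  have := hfs _ (hsmul_mem 1 one_pos le_rfl)
  rw [one_smul, hf] at this
  simp only [map_neg] at this
  linarith

end Alternative

/-- `hconv` says that `(g, G)` is convexlike in the sense of Ky Fan. -/
theorem exists_fritzJohn_multipliers_of_convexlike {α Λ : Type*} (g : α → ℝ) (G : α → Λ → ℝ)
    (hconv : ∀ x x' t, 0 ≤ t → t ≤ 1 → ∃ z, g z ≤ t * g x + (1 - t) * g x' ∧
      ∀ l, G z l ≤ t * G x l + (1 - t) * G x' l)
    {x₀ : α} (hx₀ : ∀ l, G x₀ l ≤ 0) (hmin : ∀ x, (∀ l, G x l ≤ 0) → g x₀ ≤ g x) :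
    ∃ (y : ℝ) (L : ℓ^∞(Λ, ℝ) →L[ℝ] ℝ), 0 ≤ y ∧ (∀ Φ : ℓ^∞(Λ, ℝ), (∀ l, 0 ≤ Φ l) → 0 ≤ L Φ) ∧
      0 < y + L (lpinfOne Λ) ∧
      ∀ x (Φ : ℓ^∞(Λ, ℝ)), (∀ l, G x l ≤ Φ l) → 0 ≤ y * (g x - g x₀) + L Φ := by
  set D : Set (ℝ × ℓ^∞(Λ, ℝ)) := {p | ∃ x, g x - g x₀ ≤ p.1 ∧ ∀ l, G x l ≤ p.2 l}
  have hDconv : Convex ℝ D := by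
    rintro p ⟨x, hpx, hpG⟩ r ⟨x', hrx, hrG⟩ a b ha hb hab
    obtain rfl : b = 1 - a := by linarith
    obtain ⟨z, hgz, hGz⟩ := hconv x x' a ha (by linarith)
    refine ⟨z, ?_, fun l => ?_⟩
    · simp only [Prod.fst_add, Prod.smul_fst, smul_eq_mul]
      nlinarith [mul_le_mul_of_nonneg_left hpx ha, mul_le_mul_of_nonneg_left hrx hb]
    · simp only [Prod.snd_add, Prod.smul_snd, lp.coeFn_add, lp.coeFn_smul, Pi.add_apply,
        Pi.smul_apply, smul_eq_mul]
      nlinarith [hGz l, mul_le_mul_of_nonneg_left (hpG l) ha,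
        mul_le_mul_of_nonneg_left (hrG l) hb]
  obtain ⟨y, L, hy, hL, hS, hD⟩ := exists_nonneg_functional_of_convex_upperSet D hDconv
    ⟨x₀, by simp, by simpa using hx₀⟩
    (fun p ⟨x, hpx, hpG⟩ r hpr hpr' => ⟨x, hpx.trans hpr, fun l => (hpG l).trans (hpr' l)⟩)
    (fun p ⟨x, hpx, hpG⟩ hp => by
      by_contra! hneg
      linarith [hmin x fun l => (hpG l).trans (hneg l).le])
  exact ⟨y, L, hy, hL, hS, fun x Φ hΦ => hD (g x - g x₀, Φ) ⟨x, le_rfl, hΦ⟩⟩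

theorem stmt12_general (N : ℕ) (Λ : Type*)
    (X : Set (Fin N → ℝ)) (hX : ∀ x : Fin N → ℝ, (∀ k, 0 ≤ x k) → x ∈ X)
    -- the objective quadratic function
    (A : Matrix (Fin N) (Fin N) ℝ) (b : Fin N → ℝ) (c : ℝ)
    (hZ : IsZMatrix (Matrix.fromBlocks A (Matrix.replicateCol (Fin 1) b)
      (Matrix.replicateRow (Fin 1) b) (Matrix.of fun _ _ => 2 * c)))
    (q : (Fin N → ℝ) → ℝ)
    (hq : ∀ x, q x = (1 / 2) * (x ⬝ᵥ A.mulVec x) + b ⬝ᵥ x + c)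
    -- the constraint quadratic functions
    (A' : Λ → Matrix (Fin N) (Fin N) ℝ) (b' : Λ → Fin N → ℝ) (c' : Λ → ℝ)
    (hZ' : ∀ l, IsZMatrix (Matrix.fromBlocks (A' l) (Matrix.replicateCol (Fin 1) (b' l))
      (Matrix.replicateRow (Fin 1) (b' l)) (Matrix.of fun _ _ => 2 * c' l)))
    (q' : Λ → (Fin N → ℝ) → ℝ)
    (hq' : ∀ l x, q' l x = (1 / 2) * (x ⬝ᵥ (A' l).mulVec x) + b' l ⬝ᵥ x + c' l)
    -- boundedness in λ of the constraint values, encoded by `F`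
    (F : (Fin N → ℝ) → lp (fun _ : Λ => ℝ) ∞)
    (hF : ∀ x ∈ X, ∀ l : Λ, F x l = q' l x)
    -- feasible set, optimal solution
    (X₀ : Set (Fin N → ℝ)) (hX₀ : X₀ = {x ∈ X | (⨆ l, (q' l x : EReal)) ≤ 0})
    (x₀ : Fin N → ℝ) (hx₀ : x₀ ∈ X₀) (hopt : ∀ x ∈ X₀, q x₀ ≤ q x) :
    ∃ (y : ℝ) (L : lp (fun _ : Λ => ℝ) ∞ →L[ℝ] ℝ),
      0 ≤ y ∧
      (∀ Φ : lp (fun _ : Λ => ℝ) ∞, (∀ l, 0 ≤ Φ l) → 0 ≤ L Φ) ∧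
      y + L (lpinfOne Λ) ≠ 0 ∧
      (∀ x ∈ X, y * q x₀ + L (F x₀) ≤ y * q x + L (F x)) ∧
      L (F x₀) = 0 := by
  obtain ⟨hA, hb⟩ := hZ.nonpos_of_fromBlocks
  have hq_eq : q = quadFun A b c := funext hq
  have hq'_eq : ∀ l, q' l = quadFun (A' l) (b' l) (c' l) := fun l => funext (hq' l)
  have hZ'_nonpos : ∀ l, (∀ i j, i ≠ j → A' l i j ≤ 0) ∧ ∀ i, b' l i ≤ 0 :=
    fun l => (hZ' l).nonpos_of_fromBlocks
  have hmem : ∀ x, x ∈ X₀ ↔ x ∈ X ∧ ∀ l, q' l x ≤ 0 := by simp [hX₀]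
  obtain ⟨hx₀X, hx₀feas⟩ := (hmem x₀).1 hx₀
  -- a point feasible in all of `ℝᴺ` can be replaced by its absolute value, which lies in `X`
  have hmin : ∀ x, (∀ l, q' l x ≤ 0) → q x₀ ≤ q x := fun x hx => by
    have habs' : ∀ l, q' l (fun i => |x i|) ≤ q' l x := fun l => by
      simpa only [hq'_eq] using quadFun_abs_le (hZ'_nonpos l).1 (hZ'_nonpos l).2 _ x
    have hfeas : (fun i => |x i|) ∈ X₀ :=
      (hmem _).2 ⟨hX _ fun _ => abs_nonneg _, fun l => (habs' l).trans (hx l)⟩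
    refine (hopt _ hfeas).trans ?_
    simpa only [hq_eq] using quadFun_abs_le hA hb c x
  obtain ⟨y, L, hy, hL, hS, hFJ⟩ := exists_fritzJohn_multipliers_of_convexlike q (fun x l => q' l x)
    (fun x x' t ht₀ ht₁ => ⟨_, hq_eq ▸ quadFun_sqrt_combo_le hA hb c x x' ht₀ ht₁, fun l => by
      simpa only [hq'_eq] using
        quadFun_sqrt_combo_le (hZ'_nonpos l).1 (hZ'_nonpos l).2 _ x x' ht₀ ht₁⟩)
    hx₀feas hmin
  have hLx₀ : L (F x₀) = 0 := by
    refine le_antisymm ?_ (by simpa using hFJ x₀ (F x₀) fun l => (hF x₀ hx₀X l).ge)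
    simpa using hL (-F x₀) fun l => by simpa [hF x₀ hx₀X l] using hx₀feas l
  refine ⟨y, L, hy, hL, hS.ne', fun x hx => ?_, hLx₀⟩
  have := hFJ x (F x) fun l => (hF x hx l).ge
  rw [hLx₀]
  linarith [mul_sub y (q x) (q x₀)]

/-- Fritz John conditions for the (possibly infinite) quadratic program
`inf { q(x) : x ∈ X, sup_λ q_λ(x) ≤ 0 }` with Z-matrix data. -/
theorem stmt12 (N : ℕ) (hN : 1 ≤ N) (Λ : Type*) [Nonempty Λ]
    (X : Set (Fin N → ℝ)) (hX : ∀ x : Fin N → ℝ, (∀ k, 0 ≤ x k) → x ∈ X)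
    -- the objective quadratic function
    (A : Matrix (Fin N) (Fin N) ℝ) (b : Fin N → ℝ) (c : ℝ)
    (hZ : IsZMatrix (Matrix.fromBlocks A (Matrix.replicateCol (Fin 1) b)
      (Matrix.replicateRow (Fin 1) b) (Matrix.of fun _ _ => 2 * c)))
    (q : (Fin N → ℝ) → ℝ)
    (hq : ∀ x, q x = (1 / 2) * (x ⬝ᵥ A.mulVec x) + b ⬝ᵥ x + c)
    -- the constraint quadratic functions
    (A' : Λ → Matrix (Fin N) (Fin N) ℝ) (b' : Λ → Fin N → ℝ) (c' : Λ → ℝ)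
    (hZ' : ∀ l, IsZMatrix (Matrix.fromBlocks (A' l) (Matrix.replicateCol (Fin 1) (b' l))
      (Matrix.replicateRow (Fin 1) (b' l)) (Matrix.of fun _ _ => 2 * c' l)))
    (q' : Λ → (Fin N → ℝ) → ℝ)
    (hq' : ∀ l x, q' l x = (1 / 2) * (x ⬝ᵥ (A' l).mulVec x) + b' l ⬝ᵥ x + c' l)
    -- boundedness in λ of the constraint values, encoded by `F`
    (F : (Fin N → ℝ) → lp (fun _ : Λ => ℝ) ∞)
    (hF : ∀ x ∈ X, ∀ l : Λ, F x l = q' l x)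
    -- feasible set, nonemptiness, optimal solution
    (X₀ : Set (Fin N → ℝ)) (hX₀ : X₀ = {x ∈ X | (⨆ l, (q' l x : EReal)) ≤ 0})
    (hne : X₀.Nonempty)
    (x₀ : Fin N → ℝ) (hx₀ : x₀ ∈ X₀) (hopt : ∀ x ∈ X₀, q x₀ ≤ q x) :
    ∃ (y : ℝ) (L : lp (fun _ : Λ => ℝ) ∞ →L[ℝ] ℝ),
      0 ≤ y ∧
      (∀ Φ : lp (fun _ : Λ => ℝ) ∞, (∀ l, 0 ≤ Φ l) → 0 ≤ L Φ) ∧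
      y + L (lpinfOne Λ) ≠ 0 ∧
      (∀ x ∈ X, y * q x₀ + L (F x₀) ≤ y * q x + L (F x)) ∧
      L (F x₀) = 0 :=
  stmt12_general N Λ X hX A b c hZ q hq A' b' c' hZ' q' hq' F hF X₀ hX₀ x₀ hx₀ hopt
end

section
/- Yuan-type alternative from Dines/Brickman convexity: Let N ≥ 1 (and N ≥ 3 in the sphere case), A₁, A₂ ∈ 𝕊^N, and let X be either ℝ^N or the unit sphere {x ∈ ℝ^N : ‖x‖ = 1}. Then exactly one of the following holds: (a1) there exists x ∈ X with max_{i=1,2} (1/2) x^T A_i x < 0; (a2) there exists t ∈ [0,1] such that t A₁ + (1−t) A₂ is positive semidefinite. -/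
/-!
Yuan's lemma, proved by connectedness of `[0, 1]` twice. If every combination
`P_t = t Q₁ + (1 - t) Q₂` is negative somewhere, the open sets of those `t` for which `P_t` is
negative at a point with `Q₁ < 0`, resp. `Q₂ < 0`, cover `[0, 1]`, so some `P = P_t` is negative at
an `x` with `Q₁ x < 0` and at a `y` with `Q₂ y < 0`. After replacing `y` by `-y` the polar form
`polar P x y` is nonpositive, so `P < 0` on the whole segment `[x, y]`, where therefore `Q₁ < 0` or
`Q₂ < 0` at every point; connectedness of the segment gives a point where both are negative.
Positive semidefiniteness of some `P_t` is the negation of this, and by homogeneity a point where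
both forms are negative can be moved onto the unit sphere.
-/

open Matrix Set

lemma convexComb_neg {t a b : ℝ} (ht : t ∈ Icc (0 : ℝ) 1) (ha : a < 0) (hb : b < 0) :
    t * a + (1 - t) * b < 0 := by
  obtain ⟨ht0, ht1⟩ := ht
  nlinarith [mul_le_mul_of_nonneg_left (le_max_left a b) ht0,
    mul_le_mul_of_nonneg_left (le_max_right a b) (sub_nonneg.2 ht1), max_lt ha hb]

lemma neg_or_neg_of_convexComb_neg {t a b : ℝ} (ht : t ∈ Icc (0 : ℝ) 1)
    (h : t * a + (1 - t) * b < 0) : a < 0 ∨ b < 0 := by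
  obtain ⟨ht0, ht1⟩ := ht
  by_contra! hab
  nlinarith [mul_nonneg ht0 hab.1, mul_nonneg (sub_nonneg.2 ht1) hab.2]

namespace QuadraticMap

variable {V : Type*} [AddCommGroup V] [Module ℝ V]

lemma map_smul_add_smul (Q : QuadraticForm ℝ V) (a b : ℝ) (x y : V) :
    Q (a • x + b • y) = a ^ 2 * Q x + b ^ 2 * Q y + a * b * polar Q x y := by
  rw [QuadraticMap.map_add (⇑Q), Q.map_smul, Q.map_smul, polar_smul_left, polar_smul_right]
  simp only [smul_eq_mul]
  ring

lemma continuous_map_segment (Q : QuadraticForm ℝ V) (x y : V) :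
    Continuous fun s : ℝ => Q ((1 - s) • x + s • y) := by
  simp only [map_smul_add_smul]
  fun_prop

lemma map_segment_neg {P : QuadraticForm ℝ V} {x y : V} (hx : P x < 0) (hy : P y < 0)
    (hxy : polar P x y ≤ 0) {s : ℝ} (hs : s ∈ Icc (0 : ℝ) 1) :
    P ((1 - s) • x + s • y) < 0 := by
  obtain ⟨hs0, hs1⟩ := hs
  rw [map_smul_add_smul]
  rcases hs1.eq_or_lt with rfl | hs1
  · simpa using hy
  · have : 0 < (1 - s) ^ 2 := by nlinarith
    nlinarith [mul_nonneg hs0 (sub_nonneg.2 hs1.le),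
      mul_nonpos_of_nonneg_of_nonpos (sq_nonneg s) hy.le]

variable (Q₁ Q₂ : QuadraticForm ℝ V)

lemma exists_neg_and_neg_of_segment {x y : V} (hx : Q₁ x < 0) (hy : Q₂ y < 0)
    (hseg : ∀ s ∈ Icc (0 : ℝ) 1, Q₁ ((1 - s) • x + s • y) < 0 ∨ Q₂ ((1 - s) • x + s • y) < 0) :
    ∃ z, Q₁ z < 0 ∧ Q₂ z < 0 := by
  obtain ⟨s, -, h₁, h₂⟩ := isPreconnected_Icc _ _
    (isOpen_lt (Q₁.continuous_map_segment x y) continuous_const)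
    (isOpen_lt (Q₂.continuous_map_segment x y) continuous_const) hseg
    ⟨0, left_mem_Icc.2 zero_le_one, by simpa using hx⟩
    ⟨1, right_mem_Icc.2 zero_le_one, by simpa using hy⟩
  exact ⟨_, h₁, h₂⟩

lemma exists_convexComb_neg_at_both
    (h : ∀ t ∈ Icc (0 : ℝ) 1, ∃ x, t * Q₁ x + (1 - t) * Q₂ x < 0) :
    ∃ t ∈ Icc (0 : ℝ) 1, ∃ x y, t * Q₁ x + (1 - t) * Q₂ x < 0 ∧ Q₁ x < 0 ∧
      t * Q₁ y + (1 - t) * Q₂ y < 0 ∧ Q₂ y < 0 := by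
  let S (q : V → ℝ) : Set ℝ := {t | ∃ x, t * Q₁ x + (1 - t) * Q₂ x < 0 ∧ q x < 0}
  have hopen (q : V → ℝ) : IsOpen (S q) := by
    simp only [S, ofPred_exists, ofPred_and]
    exact isOpen_iUnion fun x => (isOpen_lt (by fun_prop) continuous_const).inter isOpen_const
  have hcover : Icc (0 : ℝ) 1 ⊆ S Q₁ ∪ S Q₂ := fun t ht => by
    obtain ⟨x, hx⟩ := h t ht
    exact (neg_or_neg_of_convexComb_neg ht hx).imp (fun h₁ => ⟨x, hx, h₁⟩) fun h₂ => ⟨x, hx, h₂⟩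
  have h₁ : (Icc (0 : ℝ) 1 ∩ S Q₁).Nonempty := by
    obtain ⟨x, hx⟩ := h 1 (right_mem_Icc.2 zero_le_one)
    exact ⟨1, right_mem_Icc.2 zero_le_one, x, hx, by simpa using hx⟩
  have h₂ : (Icc (0 : ℝ) 1 ∩ S Q₂).Nonempty := by
    obtain ⟨x, hx⟩ := h 0 (left_mem_Icc.2 zero_le_one)
    exact ⟨0, left_mem_Icc.2 zero_le_one, x, hx, by simpa using hx⟩
  obtain ⟨t, ht, ⟨x, hx⟩, ⟨y, hy⟩⟩ := isPreconnected_Icc _ _ (hopen Q₁) (hopen Q₂) hcover h₁ h₂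
  exact ⟨t, ht, x, y, hx.1, hx.2, hy.1, hy.2⟩

theorem exists_neg_and_neg_iff :
    (∃ x, Q₁ x < 0 ∧ Q₂ x < 0) ↔ ∀ t ∈ Icc (0 : ℝ) 1, ∃ x, t * Q₁ x + (1 - t) * Q₂ x < 0 := by
  refine ⟨fun ⟨x, h₁, h₂⟩ t ht => ⟨x, convexComb_neg ht h₁ h₂⟩, fun h => ?_⟩
  obtain ⟨t, ht, x, y, hPx, hx, hPy, hy⟩ := exists_convexComb_neg_at_both Q₁ Q₂ h
  set P := t • Q₁ + (1 - t) • Q₂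
  have hP (z : V) : P z = t * Q₁ z + (1 - t) * Q₂ z := by simp [P]
  obtain ⟨y', hPy', hy', hpolar⟩ : ∃ y', P y' < 0 ∧ Q₂ y' < 0 ∧ polar P x y' ≤ 0 := by
    rcases le_total (polar P x y) 0 with hxy | hxy
    · exact ⟨y, by rwa [hP], hy, hxy⟩
    · refine ⟨-y, by rwa [P.map_neg, hP], by rwa [Q₂.map_neg], ?_⟩
      rw [polar_neg_right]
      linarith
  refine exists_neg_and_neg_of_segment Q₁ Q₂ hx hy' fun s hs => neg_or_neg_of_convexComb_neg ht ?_
  rw [← hP]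
  exact map_segment_neg (by rwa [hP]) hPy' hpolar hs

end QuadraticMap

namespace Matrix

variable {n : Type*} [Fintype n]

lemma toQuadraticForm'_apply {R : Type*} [CommRing R] [DecidableEq n] (A : Matrix n n R)
    (x : n → R) : A.toQuadraticForm' x = x ⬝ᵥ A *ᵥ x := by
  simp [toQuadraticForm', toLinearMap₂'_apply']

lemma IsSymm.posSemidef_iff {A : Matrix n n ℝ} (hA : A.IsSymm) :
    A.PosSemidef ↔ ∀ x, 0 ≤ x ⬝ᵥ A *ᵥ x := by
  simp [posSemidef_iff_dotProduct_mulVec, IsHermitian, hA.eq]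

theorem exists_neg_and_neg_iff_not_exists_posSemidef [DecidableEq n] {A₁ A₂ : Matrix n n ℝ}
    (h₁ : A₁.IsSymm) (h₂ : A₂.IsSymm) :
    (∃ x, x ⬝ᵥ A₁ *ᵥ x < 0 ∧ x ⬝ᵥ A₂ *ᵥ x < 0) ↔
      ¬ ∃ t : ℝ, 0 ≤ t ∧ t ≤ 1 ∧ (t • A₁ + (1 - t) • A₂).PosSemidef := by
  simp only [← toQuadraticForm'_apply, QuadraticMap.exists_neg_and_neg_iff, not_exists, not_and]
  refine forall_congr' fun t => ?_
  rw [((h₁.smul t).add (h₂.smul (1 - t))).posSemidef_iff]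
  simp only [mem_Icc, toQuadraticForm'_apply, and_imp, add_mulVec, smul_mulVec, dotProduct_add,
    dotProduct_smul, smul_eq_mul, not_forall, not_le]

end Matrix

lemma exists_sum_sq_eq_one_iff {n : Type*} [Fintype n] {p : (n → ℝ) → Prop} (h0 : ¬ p 0)
    (hsmul : ∀ c : ℝ, 0 < c → ∀ x, p x → p (c • x)) :
    (∃ x ∈ {x : n → ℝ | ∑ k, x k ^ 2 = 1}, p x) ↔ ∃ x, p x := by
  refine ⟨fun ⟨x, _, hx⟩ => ⟨x, hx⟩, fun ⟨x, hx⟩ => ?_⟩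
  have hr : 0 < ∑ k, x k ^ 2 := by
    have hx0 : x ≠ 0 := by
      rintro rfl
      exact h0 hx
    obtain ⟨k, hk⟩ := Function.ne_iff.1 hx0
    exact Finset.sum_pos' (fun i _ => sq_nonneg (x i)) ⟨k, Finset.mem_univ k, sq_pos_iff.2 hk⟩
  refine ⟨(Real.sqrt (∑ k, x k ^ 2))⁻¹ • x, ?_, hsmul _ (by positivity) x hx⟩
  simp only [mem_ofPred_eq, Pi.smul_apply, smul_eq_mul, mul_pow, ← Finset.mul_sum, inv_pow,
    Real.sq_sqrt hr.le]
  exact inv_mul_cancel₀ hr.ne'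

theorem stmt16_general (N : ℕ)
    (A₁ A₂ : Matrix (Fin N) (Fin N) ℝ) (h₁ : A₁.IsSymm) (h₂ : A₂.IsSymm)
    (X : Set (Fin N → ℝ))
    (hX : X = Set.univ ∨ (3 ≤ N ∧ X = {x : Fin N → ℝ | ∑ k, (x k) ^ 2 = 1})) :
    Xor'
      (∃ x ∈ X, max ((1 / 2) * (x ⬝ᵥ A₁.mulVec x)) ((1 / 2) * (x ⬝ᵥ A₂.mulVec x)) < 0)
      (∃ t : ℝ, 0 ≤ t ∧ t ≤ 1 ∧ (t • A₁ + (1 - t) • A₂).PosSemidef) := by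
  have hmax (a b : ℝ) : max ((1 / 2) * a) ((1 / 2) * b) < 0 ↔ a < 0 ∧ b < 0 := by
    simp only [max_lt_iff]
    constructor <;> rintro ⟨ha, hb⟩ <;> constructor <;> linarith
  simp only [hmax]
  refine xor_iff_iff_not.2 (Iff.trans ?_ (exists_neg_and_neg_iff_not_exists_posSemidef h₁ h₂))
  rcases hX with rfl | ⟨-, rfl⟩
  · simp
  · refine exists_sum_sq_eq_one_iff (by simp) fun c hc x hx => ?_
    simp only [← toQuadraticForm'_apply, QuadraticMap.map_smul, smul_eq_mul] at hx ⊢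
    exact ⟨mul_neg_of_pos_of_neg (by positivity) hx.1, mul_neg_of_pos_of_neg (by positivity) hx.2⟩

/-- Yuan-type alternative: for two real symmetric matrices and `X` either all of `ℝ^N`
or the (Euclidean) unit sphere (the latter for `N ≥ 3`), either both quadratic forms are
simultaneously negative at some point of `X`, or some convex combination of the matrices
is positive semidefinite, but never both. -/
theorem stmt16 (N : ℕ) (hN : 1 ≤ N)
    (A₁ A₂ : Matrix (Fin N) (Fin N) ℝ) (h₁ : A₁.IsSymm) (h₂ : A₂.IsSymm)
    (X : Set (Fin N → ℝ))
    (hX : X = Set.univ ∨ (3 ≤ N ∧ X = {x : Fin N → ℝ | ∑ k, (x k) ^ 2 = 1})) :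
    Xor'
      (∃ x ∈ X, max ((1 / 2) * (x ⬝ᵥ A₁.mulVec x)) ((1 / 2) * (x ⬝ᵥ A₂.mulVec x)) < 0)
      (∃ t : ℝ, 0 ≤ t ∧ t ≤ 1 ∧ (t • A₁ + (1 - t) • A₂).PosSemidef) :=
  stmt16_general N A₁ A₂ h₁ h₂ X hX
end

section
/- Dines' theorem: For N ≥ 1 and symmetric matrices A₁, A₂ ∈ 𝕊^N, the joint range set {((1/2) x^T A₁ x, (1/2) x^T A₂ x) : x ∈ ℝ^N} is a convex subset of ℝ². -/
/-!
On the span of `x` and `y` a quadratic map is `α • x + β • y ↦ α² Q x + β² Q y + αβ polar Q x y`,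
so a point `a Q x + b Q y` with `a, b ≥ 0` lies in the range as soon as it equals
`p Q x + q Q y + r polar Q x y` for a triple `(p, q, r) = (α², β², αβ)`, i.e. one for which the
symmetric matrix `[[p, r], [r, q]]` is positive semidefinite of rank at most one.
Since the target is 2-dimensional, `(p, q, r) ↦ p Q x + q Q y + r polar Q x y` has a nonzero
kernel vector `d`. Moving from `diag(a, b)` along `d` keeps the image fixed, and the determinant
reaches `0` while the trace is still nonnegative: this is the required rank-one point.
-/

open Matrix

theorem exists_mul_self_eq_of_add_nonneg_of_mul_eq_sq {p q r : ℝ} (hpq : 0 ≤ p + q)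
    (h : p * q = r ^ 2) : ∃ α β : ℝ, α * α = p ∧ β * β = q ∧ α * β = r := by
  have hp : 0 ≤ p := by nlinarith [sq_nonneg r]
  have hq : 0 ≤ q := by nlinarith [sq_nonneg r]
  rcases hp.eq_or_lt with rfl | hp
  · have hr : r = 0 := by simpa using h.symm
    exact ⟨0, √q, by simp, Real.mul_self_sqrt hq, by simp [hr]⟩
  · have hsp : 0 < √p := Real.sqrt_pos.mpr hp
    refine ⟨√p, r / √p, Real.mul_self_sqrt hp.le, ?_, by field_simp⟩
    field_simp
    rw [Real.sq_sqrt hp.le]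
    linarith

theorem exists_det_eq_zero_on_line_of_trace_eq_zero {a b : ℝ} (ha : 0 ≤ a) (hb : 0 ≤ b)
    {dp dr : ℝ} (hd : dp ≠ 0 ∨ dr ≠ 0) : ∃ s, (a + s * dp) * (b - s * dp) = (s * dr) ^ 2 := by
  have hlead : -(dp ^ 2 + dr ^ 2) ≠ 0 := by
    refine neg_ne_zero.mpr (ne_of_gt ?_)
    rcases hd with hd | hd <;> positivity
  obtain ⟨s, hs⟩ := exists_quadratic_eq_zero hlead
    ⟨√(discrim (-(dp ^ 2 + dr ^ 2)) (dp * (b - a)) (a * b)),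
      (Real.mul_self_sqrt (by unfold discrim; nlinarith [mul_nonneg ha hb])).symm⟩
  exact ⟨s, by linear_combination hs⟩

theorem exists_det_eq_zero_on_line_of_trace_ne_zero {a b : ℝ} (ha : 0 ≤ a) (hb : 0 ≤ b)
    {dp dq dr : ℝ} (hd : dp + dq ≠ 0) :
    ∃ s, 0 ≤ (a + s * dp) + (b + s * dq) ∧ (a + s * dp) * (b + s * dq) = (s * dr) ^ 2 := by
  set s₀ := -(a + b) / (dp + dq)
  have htr₀ : (a + s₀ * dp) + (b + s₀ * dq) = 0 := by
    simp only [s₀]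
    field_simp
    ring
  set f : ℝ → ℝ := fun s => (a + s * dp) * (b + s * dq) - (s * dr) ^ 2
  have hf : ContinuousOn f (Set.uIcc s₀ 0) := by fun_prop
  -- a trace-zero symmetric matrix has nonpositive determinant
  have h0 : (0 : ℝ) ∈ Set.uIcc (f s₀) (f 0) := by
    refine Set.mem_uIcc_of_le ?_ (by simp [f]; positivity)
    have : b + s₀ * dq = -(a + s₀ * dp) := by linarith
    simp only [f, this]
    nlinarith [sq_nonneg (a + s₀ * dp), sq_nonneg (s₀ * dr)]
  obtain ⟨s, hs, hfs⟩ := intermediate_value_uIcc hf h0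
  refine ⟨s, ?_, sub_eq_zero.mp hfs⟩
  rcases Set.mem_uIcc.mp hs with ⟨h₁, h₂⟩ | ⟨h₁, h₂⟩ <;>
    rcases le_total 0 (dp + dq) with hτ | hτ <;> nlinarith

theorem exists_mul_self_eq_on_line {a b : ℝ} (ha : 0 ≤ a) (hb : 0 ≤ b) {dp dq dr : ℝ}
    (hd : dp ≠ 0 ∨ dq ≠ 0 ∨ dr ≠ 0) :
    ∃ s α β : ℝ, α * α = a + s * dp ∧ β * β = b + s * dq ∧ α * β = s * dr := by
  obtain ⟨s, htr, hdet⟩ :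
      ∃ s, 0 ≤ (a + s * dp) + (b + s * dq) ∧ (a + s * dp) * (b + s * dq) = (s * dr) ^ 2 := by
    by_cases hτ : dp + dq = 0
    · obtain rfl : dq = -dp := by linarith
      have hd' : dp ≠ 0 ∨ dr ≠ 0 := by
        rcases hd with hd | hd | hd
        exacts [.inl hd, .inl (by simpa using hd), .inr hd]
      obtain ⟨s, hs⟩ := exists_det_eq_zero_on_line_of_trace_eq_zero ha hb hd'
      exact ⟨s, by linarith, by linear_combination hs⟩
    · exact exists_det_eq_zero_on_line_of_trace_ne_zero ha hb hτ
  exact ⟨s, exists_mul_self_eq_of_add_nonneg_of_mul_eq_sq htr hdet⟩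

theorem exists_mul_self_smul_add_eq {E : Type*} [AddCommGroup E] [Module ℝ E]
    [FiniteDimensional ℝ E] (hE : Module.finrank ℝ E ≤ 2) (u v w : E) {a b : ℝ}
    (ha : 0 ≤ a) (hb : 0 ≤ b) :
    ∃ α β : ℝ, (α * α) • u + (β * β) • v + (α * β) • w = a • u + b • v := by
  have hdep : ¬LinearIndependent ℝ ![u, v, w] := fun h => by
    have := h.fintype_card_le_finrank
    simp only [Fintype.card_fin] at this
    omega
  obtain ⟨g, hg, i, hi⟩ := Fintype.not_linearIndependent_iff.mp hdep
  simp only [Fin.sum_univ_three, cons_val_zero, cons_val_one, cons_val_two, head_cons,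
    tail_cons] at hg
  have hd : g 0 ≠ 0 ∨ g 1 ≠ 0 ∨ g 2 ≠ 0 := by
    fin_cases i <;> simp_all
  obtain ⟨s, α, β, hα, hβ, hαβ⟩ := exists_mul_self_eq_on_line ha hb hd
  refine ⟨α, β, ?_⟩
  rw [hα, hβ, hαβ]
  linear_combination (norm := module) s • hg

theorem QuadraticMap.map_smul_add_smul_s17 {R M N : Type*} [CommRing R] [AddCommGroup M]
    [Module R M] [AddCommGroup N] [Module R N] (Q : QuadraticMap R M N) (α β : R) (x y : M) :
    Q (α • x + β • y) = (α * α) • Q x + (β * β) • Q y + (α * β) • polar Q x y := by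
  rw [QuadraticMap.map_add Q, polar_smul_left, polar_smul_right, Q.map_smul, Q.map_smul,
    smul_smul]

theorem QuadraticMap.convex_range {V E : Type*} [AddCommGroup V] [Module ℝ V]
    [AddCommGroup E] [Module ℝ E] [FiniteDimensional ℝ E] (hE : Module.finrank ℝ E ≤ 2)
    (Q : QuadraticMap ℝ V E) : Convex ℝ (Set.range Q) := by
  rintro _ ⟨x, rfl⟩ _ ⟨y, rfl⟩ a b ha hb -
  obtain ⟨α, β, h⟩ := exists_mul_self_smul_add_eq hE (Q x) (Q y) (polar Q x y) ha hb
  exact ⟨α • x + β • y, by rw [Q.map_smul_add_smul_s17, h]⟩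

theorem stmt17_general (N : ℕ)
    (A₁ A₂ : Matrix (Fin N) (Fin N) ℝ) :
    Convex ℝ {p : ℝ × ℝ | ∃ x : Fin N → ℝ,
      p = ((1 / 2) * (x ⬝ᵥ A₁.mulVec x), (1 / 2) * (x ⬝ᵥ A₂.mulVec x))} := by
  let Q : QuadraticMap ℝ (Fin N → ℝ) (ℝ × ℝ) := (1 / 2 : ℝ) •
    ((LinearMap.inl ℝ ℝ ℝ).compQuadraticMap A₁.toQuadraticForm' +
      (LinearMap.inr ℝ ℝ ℝ).compQuadraticMap A₂.toQuadraticForm')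
  have hrange : {p : ℝ × ℝ | ∃ x : Fin N → ℝ,
      p = ((1 / 2) * (x ⬝ᵥ A₁.mulVec x), (1 / 2) * (x ⬝ᵥ A₂.mulVec x))} = Set.range Q := by
    ext p
    simp [Q, toQuadraticForm', toLinearMap₂'_apply', eq_comm]
  exact hrange ▸ Q.convex_range (by simp)

/-- Dines' theorem: the joint range of two real quadratic forms on `ℝ^N` is a convex
subset of `ℝ²`. -/
theorem stmt17 (N : ℕ) (hN : 1 ≤ N)
    (A₁ A₂ : Matrix (Fin N) (Fin N) ℝ) (h₁ : A₁.IsSymm) (h₂ : A₂.IsSymm) :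
    Convex ℝ {p : ℝ × ℝ | ∃ x : Fin N → ℝ,
      p = ((1 / 2) * (x ⬝ᵥ A₁.mulVec x), (1 / 2) * (x ⬝ᵥ A₂.mulVec x))} :=
  stmt17_general N A₁ A₂
end
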